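/- Homogeneity of the nc difference-differential operator: with Ω, f, (u,v) as in the Grassmannian framework, if σ ∈ Ω_n, σ' ∈ Ω_{n'}, X ∈ M_{n,n'}(A), r ∈ R and both (σ;σ')_{u,v}(X) and (σ;σ')_{u,v}(rX) belong to Ω, then (Δ̃^{(d;m)}_{u,v} f)(σ;σ')(rX) = r · (Δ̃^{(d;m)}_{u,v} f)(σ;σ')(X). -/

import Mathlib

open Matrix

/-- `n × n` matrices over `A`. -/
abbrev Mat (A : Type) (n : ℕ) : Type := Matrix (Fin n) (Fin n) A

/-- `m × m` block matrices with `n × n` blocks over `A`, i.e. `M_m(M_n(A))`. -/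
abbrev BMat (A : Type) (m n : ℕ) : Type := Matrix (Fin m) (Fin m) (Mat A n)

section NC

variable {R : Type} [CommRing R] {A : Type} [Ring A]

/-- Membership in the subgroup `H^{(d;m)}_n(A)` of invertible block lower-triangular
matrices `[[X,0],[Y,Z]]` with `X ∈ GL_{m-d}`, `Z ∈ GL_d`. -/
def memH (m d n : ℕ) (hd : d ≤ m) (Γ : BMat A m n) : Prop :=
  IsUnit Γ ∧
  (∀ i j : Fin m, (i : ℕ) < m - d → m - d ≤ (j : ℕ) → Γ i j = 0) ∧
  IsUnit (Matrix.of fun i j : Fin (m - d) =>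
    Γ ⟨(i : ℕ), lt_of_lt_of_le i.isLt (Nat.sub_le m d)⟩
      ⟨(j : ℕ), lt_of_lt_of_le j.isLt (Nat.sub_le m d)⟩) ∧
  IsUnit (Matrix.of fun i j : Fin d =>
    Γ ⟨m - d + (i : ℕ), by have := i.isLt; omega⟩
      ⟨m - d + (j : ℕ), by have := j.isLt; omega⟩)

/-- The relation `X ~ Y` iff `X = Y Γ` for some `Γ ∈ H^{(d;m)}_n(A)`. -/
def grel (m d n : ℕ) (hd : d ≤ m) (X Y : BMat A m n) : Prop :=
  ∃ Γ : BMat A m n, memH m d n hd Γ ∧ X = Y * Γ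

/-- Direct sum of square matrices. -/
def dsumMat {n n' : ℕ} (X : Mat A n) (Y : Mat A n') : Mat A (n + n') :=
  Matrix.reindex finSumFinEquiv finSumFinEquiv (Matrix.fromBlocks X 0 0 Y)

/-- Entrywise block direct sum `X ⊕̃ Y` of elements of `M_m(M_n(A))`, `M_m(M_{n'}(A))`. -/
def dsum {m n n' : ℕ} (X : BMat A m n) (Y : BMat A m n') : BMat A m (n + n') :=
  Matrix.of fun i j => dsumMat (X i j) (Y i j)

/-- Direct sum of square matrices with entries in a module. -/
def dsumW {W : Type} [AddCommMonoid W] {n n' : ℕ}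
    (X : Matrix (Fin n) (Fin n) W) (Y : Matrix (Fin n') (Fin n') W) :
    Matrix (Fin (n + n')) (Fin (n + n')) W :=
  Matrix.reindex finSumFinEquiv finSumFinEquiv (Matrix.fromBlocks X 0 0 Y)

/-- Block upper triangular matrix `[[P, H],[0, Q]]`. -/
def triW {W : Type} [AddCommMonoid W] {n n' : ℕ}
    (P : Matrix (Fin n) (Fin n) W) (H : Matrix (Fin n) (Fin n') W)
    (Q : Matrix (Fin n') (Fin n') W) :
    Matrix (Fin (n + n')) (Fin (n + n')) W :=
  Matrix.reindex finSumFinEquiv finSumFinEquiv (Matrix.fromBlocks P H 0 Q)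

/-- The unipotent upper triangular matrix `[[I, T],[0, I]]` over `R`. -/
def uptri (R : Type) [CommRing R] {p q : ℕ} (T : Matrix (Fin p) (Fin q) R) :
    Matrix (Fin (p + q)) (Fin (p + q)) R :=
  Matrix.reindex finSumFinEquiv finSumFinEquiv (Matrix.fromBlocks 1 T 0 1)

/-- Left multiplication of a representative by `s^{⊕ m}` for a scalar matrix `s` over `R`:
the similarity action on the nc Grassmannian. -/
def simAct [Algebra R A] {m N : ℕ} (s : Matrix (Fin N) (Fin N) R) (X : BMat A m N) :
    BMat A m N :=
  Matrix.of fun i j => s.map (algebraMap R A) * X i j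

/-- Multiplication of a matrix over an `R`-module `W` by a matrix over `R` on the left. -/
def rmulL {W : Type} [AddCommMonoid W] [Module R W] {p q r : ℕ}
    (s : Matrix (Fin p) (Fin q) R) (X : Matrix (Fin q) (Fin r) W) :
    Matrix (Fin p) (Fin r) W :=
  Matrix.of fun i j => ∑ k, s i k • X k j

/-- Multiplication of a matrix over an `R`-module `W` by a matrix over `R` on the right. -/
def rmulR {W : Type} [AddCommMonoid W] [Module R W] {p q r : ℕ}
    (X : Matrix (Fin p) (Fin q) W) (s : Matrix (Fin q) (Fin r) R) :
    Matrix (Fin p) (Fin r) W :=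
  Matrix.of fun i j => ∑ k, s k j • X i k

/-- Vertical concatenation of matrices. -/
def vcat {α : Type} {p p' q : ℕ} (X : Matrix (Fin p) (Fin q) α)
    (Y : Matrix (Fin p') (Fin q) α) : Matrix (Fin (p + p')) (Fin q) α :=
  Matrix.of fun i j =>
    if h : (i : ℕ) < p then X ⟨(i : ℕ), h⟩ j
    else Y ⟨(i : ℕ) - p, by have := i.isLt; omega⟩ j

/-- The affine embedding `X ↦ [[0, I],[I, X]]` in the case `(d;m) = (1;2)`. -/
def affEmb {n : ℕ} (X : Mat A n) : BMat A 2 n := !![0, 1; 1, X]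

/-- The matrix `[[0, X],[0, 0]] ∈ M_{n+n'}(A)` with `X ∈ M_{n,n'}(A)` in the upper right
corner. -/
def cornerMat {n n' : ℕ} (X : Matrix (Fin n) (Fin n') A) : Mat A (n + n') :=
  Matrix.reindex finSumFinEquiv finSumFinEquiv (Matrix.fromBlocks 0 X 0 0)

/-- The representative `(P;Q)_{u,v}(X)` of the element `(σ;σ')_{u,v}(X)`:
`P ⊕̃ Q + Σ_{j=1}^d [[0, X Q_{v, m-d+j}],[0,0]] ⊗ e^{(m)}_{d+u, m-d+j}`. -/
def ins {m d n n' : ℕ} (hd : d ≤ m) (u : Fin (m - d)) (v : Fin d)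
    (P : BMat A m n) (Q : BMat A m n') (X : Matrix (Fin n) (Fin n') A) :
    BMat A m (n + n') :=
  dsum P Q + Matrix.of fun (i j : Fin m) =>
    if (i : ℕ) = d + (u : ℕ) ∧ m - d ≤ (j : ℕ) then
      cornerMat (X * Q ⟨(v : ℕ), lt_of_lt_of_le v.isLt hd⟩ j)
    else 0

/-- The matrix unit `e^{(md,d)}_{u,v} ⊗ X`. -/
def eMat {md d : ℕ} {n : ℕ} (u : Fin md) (v : Fin d) (X : Mat A n) :
    Matrix (Fin md) (Fin d) (Mat A n) :=
  Matrix.of fun i j => if i = u ∧ j = v then X else 0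

/-- The block matrix `[[I_d ⊗ I_n, 0],[-Y, I_{m-d} ⊗ I_n]]` used to define `σ(Y)`. -/
def shiftMat {m d n : ℕ} (hd : d ≤ m) (Y : Matrix (Fin (m - d)) (Fin d) (Mat A n)) :
    BMat A m n :=
  Matrix.of fun i j =>
    (if i = j then (1 : Mat A n) else 0) +
    (if h : d ≤ (i : ℕ) ∧ (j : ℕ) < d then
      -Y ⟨(i : ℕ) - d, by have := i.isLt; omega⟩ ⟨(j : ℕ), h.2⟩
    else 0)

/-- A family `C` of sets of representatives is an nc set over `Gr^{(d;m)}(A)`: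
it consists of invertible matrices, is saturated under the relation `~`
(i.e. it is a set of equivalence classes), and is closed under direct sums. -/
def IsNCSetCarrier {m d : ℕ} (hd : d ≤ m) (C : ∀ n, Set (BMat A m n)) : Prop :=
  (∀ n, ∀ a ∈ C n, IsUnit a) ∧
  (∀ n, ∀ a b : BMat A m n, grel m d n hd a b → (a ∈ C n ↔ b ∈ C n)) ∧
  (∀ n n', ∀ a ∈ C n, ∀ b ∈ C n', dsum a b ∈ C (n + n'))

/-- `f` is an nc function on the nc set (with carrier) `C` over `Gr^{(d;m)}(A)`:
it descends to equivalence classes, preserves direct sums, and is similarity preserving. -/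
def IsNCFun (R : Type) [CommRing R] [Algebra R A] {W : Type} [AddCommMonoid W] [Module R W]
    {m d : ℕ} (hd : d ≤ m) (C : ∀ n, Set (BMat A m n))
    (f : ∀ n, BMat A m n → Matrix (Fin n) (Fin n) W) : Prop :=
  (∀ n, ∀ a ∈ C n, ∀ b ∈ C n, grel m d n hd a b → f n a = f n b) ∧
  (∀ n n', ∀ a ∈ C n, ∀ b ∈ C n', f (n + n') (dsum a b) = dsumW (f n a) (f n' b)) ∧
  (∀ n (s : (Matrix (Fin n) (Fin n) R)ˣ), ∀ a ∈ C n,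
    simAct (s : Matrix (Fin n) (Fin n) R) a ∈ C n →
    f n (simAct (s : Matrix (Fin n) (Fin n) R) a) =
      rmulR (rmulL (s : Matrix (Fin n) (Fin n) R) (f n a))
        ((s⁻¹ : (Matrix (Fin n) (Fin n) R)ˣ) : Matrix (Fin n) (Fin n) R))

/-- `(u,v)`-admissibility of an nc set. -/
def Admissible (R : Type) [CommRing R] [Algebra R A] {m d : ℕ} (hd : d ≤ m)
    (C : ∀ n, Set (BMat A m n)) (u : Fin (m - d)) (v : Fin d) : Prop :=
  ∀ n n' (a : BMat A m n) (b : BMat A m n') (X : Matrix (Fin n) (Fin n') A),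
    a ∈ C n → b ∈ C n' →
    ∃ r : Rˣ, ins hd u v a b ((r : R) • X) ∈ C (n + n')

/-- The similarity-invariant envelope of an nc set. -/
def envC (R : Type) [CommRing R] [Algebra R A] {m d : ℕ} (hd : d ≤ m)
    (C : ∀ n, Set (BMat A m n)) : ∀ n, Set (BMat A m n) :=
  fun n => {x | ∃ (s : (Matrix (Fin n) (Fin n) R)ˣ) (a : BMat A m n),
    a ∈ C n ∧ grel m d n hd x (simAct (s : Matrix (Fin n) (Fin n) R) a)}

end NC

section Res

variable {R : Type} [CommRing R] {A : Type} [Ring A] [Algebra R A]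

/-- Entrywise inclusion `M_m(M_n(B)) → M_m(M_n(A))` for a subalgebra `B ⊆ A`. -/
def bmap (D : Subalgebra R A) {m n : ℕ} (b : BMat (↥D) m n) : BMat A m n :=
  Matrix.of fun i j => (b i j).map (fun x => (x : A))

/-- Entrywise inclusion for rectangular matrices over a subalgebra. -/
def rcmap (D : Subalgebra R A) {n n' : ℕ} (X : Matrix (Fin n) (Fin n') ↥D) :
    Matrix (Fin n) (Fin n') A :=
  X.map (fun x => (x : A))

/-- `X` is invertible in `M_m(M_n(B))` for the subalgebra `B = D ⊆ A`. -/
def invIn (D : Subalgebra R A) {m n : ℕ} (X : BMat A m n) : Prop :=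
  (∀ i j k l, X i j k l ∈ D) ∧
  ∃ Y : BMat A m n, (∀ i j k l, Y i j k l ∈ D) ∧ X * Y = 1 ∧ Y * X = 1

/-- The amplification `a^{⊕̃ n}` of an element `a ∈ M_m(A) = M_m(M_1(A))`. -/
def ampl {m : ℕ} (a : BMat A m 1) (n : ℕ) : BMat A m n :=
  Matrix.of fun i j => Matrix.diagonal (fun _ => a i j 0 0)

/-- The matrix `r^{(d;m)}(P;Q)`: first `m-d` block columns are the last `m-d` block
columns of `P`, last `d` block columns are the last `d` block columns of `Q`. -/
def rmat {m d n : ℕ} (hd : d ≤ m) (P Q : BMat A m n) : BMat A m n :=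
  Matrix.of fun i j =>
    if h : (j : ℕ) < m - d then P i ⟨d + (j : ℕ), by omega⟩ else Q i j

/-- The value `[B_{v,m-d+1},…,B_{v,m}] ⋅ ζ_u` of the `(d;m)`-Grassmannian resolvent,
where `ζ_u` is the `u`-th bottom block column of the inverse `Rinv` of an `r`-matrix. -/
def resVal {m d n : ℕ} (hd : d ≤ m) (v : Fin d) (u : Fin (m - d))
    (Bm Rinv : BMat A m n) : Mat A n :=
  ∑ j : Fin d,
    Bm ⟨(v : ℕ), lt_of_lt_of_le v.isLt hd⟩ ⟨m - d + (j : ℕ), by have := j.isLt; omega⟩ *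
    Rinv ⟨m - d + (j : ℕ), by have := j.isLt; omega⟩ ⟨d + (u : ℕ), by have := u.isLt; omega⟩

/-- Membership in the `(d;m)`-Grassmannian `B`-resolvent set of `π` (represented by `p`):
`b` represents an element of `Gr^{(d;m)}_n(B)` such that `π^{⊕n}` and `b` are
transversal in `A`. -/
def ResMem {m d : ℕ} (hd : d ≤ m) (p : BMat A m 1) (D : Subalgebra R A) {n : ℕ}
    (b : BMat (↥D) m n) : Prop :=
  IsUnit b ∧ IsUnit (rmat hd (ampl p n) (bmap D b))

end Res

/-! With `T = r I_n ⊕ I_{n'}` we have `T · (σ;σ')(X) = (σ;σ')(rX) · T` blockwise. Hence the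
scalar matrix `S = [[I, T], [0, I]]` commutes with every block of
`Y = (σ;σ')(rX) ⊕̃ (σ;σ')(X)`, i.e. `S · Y = Y · diag(S, …, S)` with `diag(S, …, S) ∈ H`.
An nc function is constant on `~`-classes and similarity preserving, so `S f(Y) = f(Y) S`.
The upper right block of this identity is `T f((σ;σ')(X)) = f((σ;σ')(rX)) T`, and the upper
right block of that is `r H = H'`. -/

section BlockMatrix

variable {α : Type*} {p q : ℕ}

theorem reindex_finSumFinEquiv_mul [NonUnitalNonAssocSemiring α]
    (M N : Matrix (Fin p ⊕ Fin q) (Fin p ⊕ Fin q) α) :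
    reindex finSumFinEquiv finSumFinEquiv M * reindex finSumFinEquiv finSumFinEquiv N =
      reindex finSumFinEquiv finSumFinEquiv (M * N) :=
  submatrix_mul_equiv M N _ finSumFinEquiv.symm _

theorem isUnit_diagonal_const [Ring α] {k : Type*} [Fintype k] [DecidableEq k] {g : α}
    (hg : IsUnit g) : IsUnit (diagonal fun _ : k => g) :=
  (hg.map (Pi.constRingHom k α)).map (diagonalRingHom k α)

theorem dsumMat_add_cornerMat {A : Type} [Ring A] (P : Mat A p) (Q : Mat A q)
    (Y : Matrix (Fin p) (Fin q) A) :
    dsumMat P Q + cornerMat Y = reindex finSumFinEquiv finSumFinEquiv (fromBlocks P Y 0 Q) := by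
  rw [show fromBlocks P Y 0 Q = fromBlocks P 0 0 Q + fromBlocks 0 Y 0 0 by simp [fromBlocks_add]]
  rfl

variable {R : Type} [CommRing R]

theorem uptri_mul_uptri (T₁ T₂ : Matrix (Fin p) (Fin q) R) :
    uptri R T₁ * uptri R T₂ = uptri R (T₁ + T₂) := by
  rw [uptri, uptri, uptri, reindex_finSumFinEquiv_mul, fromBlocks_multiply]
  simp [add_comm]

theorem uptri_zero : uptri R (0 : Matrix (Fin p) (Fin q) R) = 1 := by
  rw [uptri, fromBlocks_one, reindex_apply, submatrix_one_equiv]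

theorem isUnit_uptri (T : Matrix (Fin p) (Fin q) R) : IsUnit (uptri R T) :=
  ⟨⟨uptri R T, uptri R (-T), by rw [uptri_mul_uptri, add_neg_cancel, uptri_zero],
    by rw [uptri_mul_uptri, neg_add_cancel, uptri_zero]⟩, rfl⟩

theorem commute_map_uptri_dsumMat {A : Type} [Ring A] [Algebra R A]
    (T : Matrix (Fin p) (Fin q) R) {P : Mat A p} {Q : Mat A q}
    (hT : T.map (algebraMap R A) * Q = P * T.map (algebraMap R A)) :
    Commute ((uptri R T).map (algebraMap R A)) (dsumMat P Q) := by
  rw [Commute, SemiconjBy, uptri, dsumMat, reindex_apply, ← submatrix_map, fromBlocks_map,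
    ← reindex_apply, reindex_finSumFinEquiv_mul, reindex_finSumFinEquiv_mul,
    fromBlocks_multiply, fromBlocks_multiply]
  simp [hT]

end BlockMatrix

section ScalarAction

variable {R : Type} [CommRing R] {W : Type} [AddCommMonoid W] [Module R W]

theorem rmulR_rmulR {p q s t : ℕ} (M : Matrix (Fin p) (Fin q) W) (P : Matrix (Fin q) (Fin s) R)
    (Q : Matrix (Fin s) (Fin t) R) : rmulR (rmulR M P) Q = rmulR M (P * Q) := by
  ext i j
  simp only [rmulR, of_apply, Finset.smul_sum, smul_smul, mul_apply, Finset.sum_smul]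
  rw [Finset.sum_comm]
  simp_rw [mul_comm]

theorem rmulR_one {p q : ℕ} (M : Matrix (Fin p) (Fin q) W) :
    rmulR M (1 : Matrix (Fin q) (Fin q) R) = M := by
  ext i j
  simp [rmulR, one_apply, ite_smul]

theorem rmulL_eq_rmulR_of_uptri_dsumW {p q : ℕ} {T : Matrix (Fin p) (Fin q) R}
    {P : Matrix (Fin p) (Fin p) W} {Q : Matrix (Fin q) (Fin q) W}
    (h : rmulL (uptri R T) (dsumW P Q) = rmulR (dsumW P Q) (uptri R T)) :
    rmulL T Q = rmulR P T := by
  ext i j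
  simpa [rmulL, rmulR, uptri, dsumW, Fin.sum_univ_add] using
    congrFun₂ h (finSumFinEquiv (.inl i)) (finSumFinEquiv (.inr j))

theorem eq_smul_of_rmulL_dsumW_eq_rmulR {n n' : ℕ} {r : R} {P : Matrix (Fin n) (Fin n) W}
    {Q : Matrix (Fin n') (Fin n') W} {H H' : Matrix (Fin n) (Fin n') W}
    (h : rmulL (dsumW (r • 1 : Matrix (Fin n) (Fin n) R) 1) (triW P H Q) =
      rmulR (triW P H' Q) (dsumW (r • 1 : Matrix (Fin n) (Fin n) R) 1)) :
    H' = r • H := by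
  ext i j
  simpa [rmulL, rmulR, triW, dsumW, Fin.sum_univ_add, one_apply, ite_smul] using
    (congrFun₂ h (finSumFinEquiv (.inl i)) (finSumFinEquiv (.inr j))).symm

end ScalarAction

section Grassmannian

variable {R : Type} [CommRing R] {A : Type} [Ring A] [Algebra R A]

theorem memH_diagonal {m d n : ℕ} (hd : d ≤ m) {g : Mat A n} (hg : IsUnit g) :
    memH m d n hd (diagonal fun _ => g) := by
  refine ⟨isUnit_diagonal_const hg, fun i j hi hj => diagonal_apply_ne _ ?_, ?_, ?_⟩
  · exact Fin.ne_of_val_ne (by omega)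
  · convert isUnit_diagonal_const (k := Fin (m - d)) hg using 1
    ext i j : 1
    simp [diagonal_apply, Fin.ext_iff]
  · convert isUnit_diagonal_const (k := Fin d) hg using 1
    ext i j : 1
    simp [diagonal_apply, Fin.ext_iff]

theorem ins_apply {m d n n' : ℕ} (hd : d ≤ m) (u : Fin (m - d)) (v : Fin d)
    (a : BMat A m n) (b : BMat A m n') (X : Matrix (Fin n) (Fin n') A) (i j : Fin m) :
    ins hd u v a b X i j =
      reindex finSumFinEquiv finSumFinEquiv
        (fromBlocks (a i j)
          (if (i : ℕ) = d + (u : ℕ) ∧ m - d ≤ (j : ℕ) then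
            X * b ⟨(v : ℕ), lt_of_lt_of_le v.isLt hd⟩ j else 0) 0 (b i j)) := by
  by_cases h : (i : ℕ) = d + (u : ℕ) ∧ m - d ≤ (j : ℕ)
  · simp only [ins, dsum, Matrix.add_apply, of_apply, if_pos h, dsumMat_add_cornerMat]
  · simp only [ins, dsum, Matrix.add_apply, of_apply, if_neg h, add_zero, dsumMat]

theorem map_dsumW_smul_one_mul_ins {m d n n' : ℕ} (hd : d ≤ m) (u : Fin (m - d)) (v : Fin d)
    (a : BMat A m n) (b : BMat A m n') (X : Matrix (Fin n) (Fin n') A) (r : R) (i j : Fin m) :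
    (dsumW (r • 1 : Matrix (Fin n) (Fin n) R) 1).map (algebraMap R A) * ins hd u v a b X i j =
      ins hd u v a b (r • X) i j *
        (dsumW (r • 1 : Matrix (Fin n) (Fin n) R) 1).map (algebraMap R A) := by
  have hr : (r • 1 : Matrix (Fin n) (Fin n) R).map (algebraMap R A) = r • 1 := by
    ext k l
    by_cases h : k = l <;> simp [one_apply, h, Algebra.algebraMap_eq_smul_one]
  rw [ins_apply, ins_apply, dsumW, reindex_apply, ← submatrix_map, fromBlocks_map,
    ← reindex_apply, reindex_finSumFinEquiv_mul, reindex_finSumFinEquiv_mul,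
    fromBlocks_multiply, fromBlocks_multiply]
  simp [hr, smul_ite]

variable {W : Type} [AddCommMonoid W] [Module R W] {m d : ℕ} {hd : d ≤ m}
  {C : ∀ n, Set (BMat A m n)} {f : ∀ n, BMat A m n → Matrix (Fin n) (Fin n) W}

theorem IsNCFun.rmulL_eq_rmulR_of_commute (hC : IsNCSetCarrier hd C) (hf : IsNCFun R hd C f)
    {N : ℕ} {s : Matrix (Fin N) (Fin N) R} (hs : IsUnit s) {Y : BMat A m N} (hY : Y ∈ C N)
    (hcomm : ∀ i j, Commute (s.map (algebraMap R A)) (Y i j)) :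
    rmulL s (f N Y) = rmulR (f N Y) s := by
  have hΓ : grel m d N hd (simAct s Y) Y :=
    ⟨diagonal fun _ => s.map (algebraMap R A),
      memH_diagonal hd (hs.map (algebraMap R A).mapMatrix),
      ext fun i j => by simp [simAct, (hcomm i j).eq]⟩
  have hsY : simAct s Y ∈ C N := (hC.2.1 _ _ _ hΓ).2 hY
  have hsim := hf.2.2 N hs.unit Y hY hsY
  rw [hs.unit_spec, hf.1 N _ hsY Y hY hΓ] at hsim
  calc rmulL s (f N Y)
      = rmulR (rmulR (rmulL s (f N Y)) (↑hs.unit⁻¹ : Matrix _ _ R)) s := by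
        rw [rmulR_rmulR, hs.val_inv_mul, rmulR_one]
    _ = rmulR (f N Y) s := by rw [← hsim]

end Grassmannian

theorem diff_value_homogeneous_general {R : Type} [CommRing R] {A : Type} [Ring A] [Algebra R A]
    {W : Type} [AddCommMonoid W] [Module R W]
    (m d : ℕ) (hd : d ≤ m)
    (C : ∀ n, Set (BMat A m n)) (hC : IsNCSetCarrier hd C)
    (f : ∀ n, BMat A m n → Matrix (Fin n) (Fin n) W) (hf : IsNCFun R hd C f)
    (u : Fin (m - d)) (v : Fin d) {n n' : ℕ}
    (a : BMat A m n) (b : BMat A m n')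
    (X : Matrix (Fin n) (Fin n') A) (r : R)
    (hmem : ins hd u v a b X ∈ C (n + n'))
    (hmem' : ins hd u v a b (r • X) ∈ C (n + n'))
    (H H' : Matrix (Fin n) (Fin n') W)
    (hH : f (n + n') (ins hd u v a b X) = triW (f n a) H (f n' b))
    (hH' : f (n + n') (ins hd u v a b (r • X)) = triW (f n a) H' (f n' b)) :
    H' = r • H := by
  set T : Matrix (Fin (n + n')) (Fin (n + n')) R := dsumW (r • 1 : Matrix (Fin n) (Fin n) R) 1
  have hY : dsum (ins hd u v a b (r • X)) (ins hd u v a b X) ∈ C (n + n' + (n + n')) :=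
    hC.2.2 _ _ _ hmem' _ hmem
  have key := hf.rmulL_eq_rmulR_of_commute hC (isUnit_uptri T) hY fun i j =>
    commute_map_uptri_dsumMat T (map_dsumW_smul_one_mul_ins hd u v a b X r i j)
  rw [hf.2.1 _ _ _ hmem' _ hmem, hH, hH'] at key
  exact eq_smul_of_rmulL_dsumW_eq_rmulR (rmulL_eq_rmulR_of_uptri_dsumW key)

/-- homogeneity of the nc difference-differential operator. -/
theorem diff_value_homogeneous {R : Type} [CommRing R] {A : Type} [Ring A] [Algebra R A]
    {W : Type} [AddCommMonoid W] [Module R W]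
    (m d : ℕ) (hd1 : 1 ≤ d) (hd : d ≤ m)
    (C : ∀ n, Set (BMat A m n)) (hC : IsNCSetCarrier hd C)
    (f : ∀ n, BMat A m n → Matrix (Fin n) (Fin n) W) (hf : IsNCFun R hd C f)
    (u : Fin (m - d)) (v : Fin d) {n n' : ℕ}
    (a : BMat A m n) (ha : a ∈ C n) (b : BMat A m n') (hb : b ∈ C n')
    (X : Matrix (Fin n) (Fin n') A) (r : R)
    (hmem : ins hd u v a b X ∈ C (n + n'))
    (hmem' : ins hd u v a b (r • X) ∈ C (n + n'))
    (H H' : Matrix (Fin n) (Fin n') W)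
    (hH : f (n + n') (ins hd u v a b X) = triW (f n a) H (f n' b))
    (hH' : f (n + n') (ins hd u v a b (r • X)) = triW (f n a) H' (f n' b)) :
    H' = r • H :=
  diff_value_homogeneous_general m d hd C hC f hf u v a b X r hmem hmem' H H' hH hH'
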